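/- Let S₀ = Σ_{k∈ℤ², k≠(0,0)} (k₁² + k₂²)^{−2}. There exist constants C > 0 and δ > 0 such that for all α > 0 and Δ > 0 with αΔ < δ, the aliased two-dimensional Matérn spectral density with ν = 1 at frequency (0,0) satisfies | M_Δ((0,0); 1, 2)/(4π/α²) − 1 − (S₀/(16π⁴)) α⁴Δ⁴ | ≤ C α⁶Δ⁶. (Numerically 16π⁴/S₀ ≈ 258.602.) -/

import Mathlib

open Real

/-- `S₀ = Σ_{k∈ℤ², k≠(0,0)} (k₁² + k₂²)^{-2}`. -/
noncomputable def S0 : ℝ :=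
  ∑' k : ℤ × ℤ, if k = (0, 0) then 0 else 1 / ((k.1 : ℝ) ^ 2 + (k.2 : ℝ) ^ 2) ^ 2

/-!
With `t = αΔ` and `|k|² = k₁² + k₂²`, the normalized density is `Σ_k t⁴ / (t² + 4π²|k|²)²`.
The term `k = 0` equals `1`; for `k ≠ 0` the term differs from `t⁴ / (4π²|k|²)²` by at most
`2 t⁶ / (4π²|k|²)³ ≤ (t⁶ / (32π⁶)) |k|⁻⁴`, because `|k|² ≥ 1`. Summing these estimates against
the convergent lattice sum `S₀` gives the expansion with `C = S₀ / (32π⁶)`, for every value of `αΔ`.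
-/

theorem abs_sq_div_add_sq_sub_sq_div_sq_le {s a : ℝ} (hs : 0 ≤ s) (ha : 0 < a) :
    |s ^ 2 / (s + a) ^ 2 - s ^ 2 / a ^ 2| ≤ 2 * s ^ 3 / a ^ 3 := by
  have hle : s ^ 2 / (s + a) ^ 2 ≤ s ^ 2 / a ^ 2 := by gcongr; linarith
  rw [abs_sub_comm, abs_of_nonneg (sub_nonneg.mpr hle),
    div_sub_div _ _ (by positivity) (by positivity), div_le_div_iff₀ (by positivity) (by positivity)]
  have : 0 ≤ s ^ 3 * a ^ 2 * (2 * s ^ 2 + 3 * a * s) := by positivity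
  linarith

theorem Summable.of_abs_sub_mul_le {ι : Type*} {f g : ι → ℝ} {c d : ℝ} (hg : Summable g)
    (h : ∀ i, |f i - c * g i| ≤ d * g i) : Summable f := by
  have hdiff : Summable fun i => f i - c * g i := .of_norm_bounded (hg.mul_left d) h
  simpa using hdiff.add (hg.mul_left c)

theorem abs_tsum_sub_mul_tsum_le {ι : Type*} {f g : ι → ℝ} {c d : ℝ} (hg : Summable g)
    (h : ∀ i, |f i - c * g i| ≤ d * g i) :
    |∑' i, f i - c * ∑' i, g i| ≤ d * ∑' i, g i := by
  have hdiff : Summable fun i => f i - c * g i := .of_norm_bounded (hg.mul_left d) h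
  rw [← tsum_mul_left, ← (hg.of_abs_sub_mul_le h).tsum_sub (hg.mul_left c), ← tsum_mul_left]
  exact (norm_tsum_le_tsum_norm hdiff.norm).trans (hdiff.norm.tsum_le_tsum h (hg.mul_left d))

def latticeSqNorm (k : ℤ × ℤ) : ℝ := (k.1 : ℝ) ^ 2 + (k.2 : ℝ) ^ 2

noncomputable def S0Term (k : ℤ × ℤ) : ℝ := if k = 0 then 0 else 1 / latticeSqNorm k ^ 2

theorem S0_eq_tsum : S0 = ∑' k, S0Term k := rfl

theorem one_le_latticeSqNorm {k : ℤ × ℤ} (hk : k ≠ 0) : 1 ≤ latticeSqNorm k := by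
  have h : k.1 ≠ 0 ∨ k.2 ≠ 0 := by
    contrapose! hk; exact Prod.ext hk.1 hk.2
  have one_le_sq : ∀ n : ℤ, n ≠ 0 → (1 : ℝ) ≤ (n : ℝ) ^ 2 := fun n hn => by
    rw [one_le_sq_iff_one_le_abs, ← Int.cast_abs]; exact_mod_cast Int.one_le_abs hn
  unfold latticeSqNorm
  rcases h with h | h
  · linarith [one_le_sq _ h, sq_nonneg (k.2 : ℝ)]
  · linarith [one_le_sq _ h, sq_nonneg (k.1 : ℝ)]

theorem S0Term_nonneg (k : ℤ × ℤ) : 0 ≤ S0Term k := by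
  unfold S0Term latticeSqNorm; split_ifs <;> positivity

theorem S0Term_le_norm_rpow (k : ℤ × ℤ) :
    S0Term k ≤ ‖(finTwoArrowEquiv ℤ).symm k‖ ^ (-4 : ℝ) := by
  unfold S0Term
  split_ifs with hk
  · positivity
  · have hn : ‖(finTwoArrowEquiv ℤ).symm k‖ = max |(k.1 : ℝ)| |(k.2 : ℝ)| := by
      simp [EisensteinSeries.norm_eq_max_natAbs]
    have hmq : ‖(finTwoArrowEquiv ℤ).symm k‖ ^ 2 ≤ latticeSqNorm k := by
      rw [hn, latticeSqNorm]
      rcases le_total |(k.1 : ℝ)| |(k.2 : ℝ)| with h | h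
      · rw [max_eq_right h, sq_abs]; linarith [sq_nonneg (k.1 : ℝ)]
      · rw [max_eq_left h, sq_abs]; linarith [sq_nonneg (k.2 : ℝ)]
    have hm : 0 < ‖(finTwoArrowEquiv ℤ).symm k‖ := norm_pos_iff.mpr
      (by simpa [funext_iff, Fin.forall_fin_two, Prod.ext_iff] using hk)
    rw [Real.rpow_neg hm.le, ← one_div, show (4 : ℝ) = (2 * 2 : ℕ) by norm_num, Real.rpow_natCast,
      pow_mul]
    gcongr

theorem summable_S0Term : Summable S0Term :=
  .of_nonneg_of_le S0Term_nonneg S0Term_le_norm_rpow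
    ((EisensteinSeries.summable_one_div_norm_rpow (by norm_num)).comp_injective
      (finTwoArrowEquiv ℤ).symm.injective)

theorem S0_pos : 0 < S0 := by
  rw [S0_eq_tsum]
  refine summable_S0Term.tsum_pos S0Term_nonneg (1, 0) ?_
  simp [S0Term, latticeSqNorm]

noncomputable def aliasTerm (t : ℝ) (k : ℤ × ℤ) : ℝ :=
  t ^ 4 / (t ^ 2 + 4 * π ^ 2 * latticeSqNorm k) ^ 2

theorem aliasTerm_zero {t : ℝ} (ht : t ≠ 0) : aliasTerm t 0 = 1 := by
  simp [aliasTerm, latticeSqNorm, ← pow_mul, ht]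

theorem matern_summand_eq_aliasTerm_div {α Δ : ℝ} (hα : 0 < α) (hΔ : 0 < Δ) (k : ℤ × ℤ) :
    1 / (α ^ 2 + 4 * π ^ 2 * ((0 : ℝ) + (k.1 : ℝ) / Δ) ^ 2
      + 4 * π ^ 2 * ((0 : ℝ) + (k.2 : ℝ) / Δ) ^ 2) ^ 2 = aliasTerm (α * Δ) k / α ^ 4 := by
  unfold aliasTerm latticeSqNorm
  field_simp
  ring

theorem abs_aliasTerm_sub_le (t : ℝ) (k : ℤ × ℤ) :
    |(if k = 0 then 0 else aliasTerm t k) - t ^ 4 / (16 * π ^ 4) * S0Term k|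
      ≤ t ^ 6 / (32 * π ^ 6) * S0Term k := by
  unfold S0Term
  split_ifs with hk
  · simp
  have hq := one_le_latticeSqNorm hk
  calc _ = |t ^ 4 / (t ^ 2 + 4 * π ^ 2 * latticeSqNorm k) ^ 2
        - t ^ 4 / (4 * π ^ 2 * latticeSqNorm k) ^ 2| := by
        rw [aliasTerm]; congr 2; field_simp; ring
    _ ≤ 2 * t ^ 6 / (4 * π ^ 2 * latticeSqNorm k) ^ 3 := by
        simpa only [← pow_mul] using abs_sq_div_add_sq_sub_sq_div_sq_le (sq_nonneg t)
          (show 0 < 4 * π ^ 2 * latticeSqNorm k by positivity)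
    _ = t ^ 6 / (32 * π ^ 6) * (1 / latticeSqNorm k ^ 3) := by field_simp; ring
    _ ≤ t ^ 6 / (32 * π ^ 6) * (1 / latticeSqNorm k ^ 2) := by
        gcongr
        norm_num

theorem abs_tsum_aliasTerm_sub_le {t : ℝ} (ht : t ≠ 0) :
    |∑' k, aliasTerm t k - 1 - t ^ 4 / (16 * π ^ 4) * S0| ≤ t ^ 6 / (32 * π ^ 6) * S0 := by
  have hpunct := summable_S0Term.of_abs_sub_mul_le (abs_aliasTerm_sub_le t)
  have hupdate : Function.update (aliasTerm t) 0 0 = fun k => if k = 0 then 0 else aliasTerm t k :=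
    funext fun k => Function.update_apply ..
  rw [Summable.tsum_eq_add_tsum_ite' 0 (hupdate ▸ hpunct), aliasTerm_zero ht, add_sub_cancel_left,
    S0_eq_tsum]
  exact abs_tsum_sub_mul_tsum_le summable_S0Term (abs_aliasTerm_sub_le t)

theorem matern_one_d2_freq_zero_expansion :
    ∃ C > (0 : ℝ), ∃ δ > (0 : ℝ), ∀ α Δ : ℝ, 0 < α → 0 < Δ → α * Δ < δ →
      |(4 * π * α ^ 2 * ∑' k : ℤ × ℤ,
            1 / (α ^ 2 + 4 * π ^ 2 * ((0 : ℝ) + (k.1 : ℝ) / Δ) ^ 2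
                + 4 * π ^ 2 * ((0 : ℝ) + (k.2 : ℝ) / Δ) ^ 2) ^ 2) / (4 * π / α ^ 2)
          - 1 - (S0 / (16 * π ^ 4)) * α ^ 4 * Δ ^ 4|
        ≤ C * α ^ 6 * Δ ^ 6 := by
  refine ⟨S0 / (32 * π ^ 6), by have := S0_pos; positivity, 1, one_pos, fun α Δ hα hΔ _ => ?_⟩
  have hratio : (4 * π * α ^ 2 * ∑' k : ℤ × ℤ,
      1 / (α ^ 2 + 4 * π ^ 2 * ((0 : ℝ) + (k.1 : ℝ) / Δ) ^ 2
        + 4 * π ^ 2 * ((0 : ℝ) + (k.2 : ℝ) / Δ) ^ 2) ^ 2) / (4 * π / α ^ 2)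
      = ∑' k, aliasTerm (α * Δ) k := by
    simp_rw [matern_summand_eq_aliasTerm_div hα hΔ, tsum_div_const]
    field_simp
  calc _ = |∑' k, aliasTerm (α * Δ) k - 1 - (α * Δ) ^ 4 / (16 * π ^ 4) * S0| := by
        rw [hratio]; ring_nf
    _ ≤ (α * Δ) ^ 6 / (32 * π ^ 6) * S0 := abs_tsum_aliasTerm_sub_le (mul_pos hα hΔ).ne'
    _ = S0 / (32 * π ^ 6) * α ^ 6 * Δ ^ 6 := by ring
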